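/- arXiv:1209.5089 — 4 statements merged into one kernel-verified Lean document; each statement's English description precedes it below -/
import Mathlib

section
/- Let Γ be a simplicial complex with Γ = Δ_d(Γ^{[d]}) whose vertex set carries a linear order, and let k be any field. If for every subset W of the vertex set of Γ the reduced simplicial homology satisfies H̃_d(Γ_W; k) = 0 (as holds whenever the Stanley-Reisner ideal of Γ has a (d+1)-linear resolution over k), then the pure d-skeleton Γ^{[d]} is orientably-d-cycle-complete. -/
open Finset

namespace ChordedPaper

variable {V : Type*} [DecidableEq V] [Fintype V]

/-- A simplicial complex: a set of finsets (faces) closed under taking subsets.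
(The vertices of the complex are the vertices of its faces, so all singletons of
vertices are automatically faces.) -/
def IsComplex (K : Set (Finset V)) : Prop :=
  ∀ F ∈ K, ∀ G ⊆ F, G ∈ K

/-- The vertex set `V(K)` of a complex. -/
def verts (K : Set (Finset V)) : Set V :=
  {v | ∃ F ∈ K, v ∈ F}

/-- The `d`-dimensional faces (cardinality `d+1`) of `K`. -/
def dfaces (K : Set (Finset V)) (d : ℕ) : Set (Finset V) :=
  {F | F ∈ K ∧ F.card = d + 1}

/-- `K` is pure `d`-dimensional: every face is contained in a `d`-face. -/
def IsPureD (K : Set (Finset V)) (d : ℕ) : Prop :=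
  ∀ F ∈ K, ∃ G ∈ dfaces K d, F ⊆ G

/-- The complex generated by a set of facets. -/
def gen (S : Set (Finset V)) : Set (Finset V) :=
  {G | ∃ F ∈ S, G ⊆ F}

/-- The pure `d`-skeleton `K^{[d]}`: the complex whose facets are the `d`-faces of `K`. -/
def skel (K : Set (Finset V)) (d : ℕ) : Set (Finset V) :=
  gen (dfaces K d)

/-- The induced subcomplex `K_W` on a set `W` of vertices. -/
def induced (K : Set (Finset V)) (W : Set V) : Set (Finset V) :=
  {F | F ∈ K ∧ ↑F ⊆ W}

/-- Two `d`-faces of `S` are adjacent in a `d`-path if they share `d` vertices. -/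
def adj (S : Set (Finset V)) (d : ℕ) (F G : Finset V) : Prop :=
  F ∈ S ∧ G ∈ S ∧ (F ∩ G).card = d

/-- `d`-path-connectedness: any two `d`-faces are joined by a `d`-path. -/
def PathConn (K : Set (Finset V)) (d : ℕ) : Prop :=
  ∀ F ∈ dfaces K d, ∀ G ∈ dfaces K d, Relation.ReflTransGen (adj (dfaces K d) d) F G

/-- A `d`-dimensional cycle: a pure `d`-dimensional, `d`-path-connected complex in which
every `(d-1)`-face lies in an even number of `d`-faces. -/
def IsCycle (Ω : Set (Finset V)) (d : ℕ) : Prop :=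
  IsComplex Ω ∧ IsPureD Ω d ∧ (dfaces Ω d).Nonempty ∧ PathConn Ω d ∧
    ∀ f ∈ Ω, Finset.card f = d → Even {F | F ∈ dfaces Ω d ∧ f ⊆ F}.ncard

/-- A `d`-dimensional cycle in the complex `Γ`. -/
def CycleIn (Γ Ω : Set (Finset V)) (d : ℕ) : Prop :=
  Ω ⊆ Γ ∧ IsCycle Ω d

/-- Face-minimality: no strict subset of the `d`-faces of `Ω` forms a `d`-dimensional cycle. -/
def FaceMinimal (Ω : Set (Finset V)) (d : ℕ) : Prop :=
  ∀ S : Set (Finset V), S ⊂ dfaces Ω d → ¬ IsCycle (gen S) d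

/-- Vertex-minimality of a cycle `Ω` in `Γ`: no `d`-dimensional cycle in `Γ` lies on a
strict subset of the vertices of `Ω`. -/
def VertexMinimal (Γ Ω : Set (Finset V)) (d : ℕ) : Prop :=
  ∀ Ω', CycleIn Γ Ω' d → ¬ (verts Ω' ⊂ verts Ω)

/-- `d`-completeness: every `(d+1)`-subset of the vertex set is a face. -/
def DComplete (K : Set (Finset V)) (d : ℕ) : Prop :=
  ∀ S : Finset V, ↑S ⊆ verts K → S.card = d + 1 → S ∈ K

/-- A chord set `C` of the `d`-dimensional cycle `Ω` in `Γ`. -/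
def ChordSet (Γ Ω : Set (Finset V)) (d : ℕ) (C : Set (Finset V)) : Prop :=
  C ⊆ dfaces Γ d ∧ (∀ F ∈ C, F ∉ Ω) ∧ (∀ F ∈ C, ↑F ⊆ verts Ω) ∧
    ∃ (n : ℕ) (Ωi : Fin n → Set (Finset V)), 2 ≤ n ∧ (∀ i, IsCycle (Ωi i) d) ∧
      (⋃ i, dfaces (Ωi i) d) = dfaces Ω d ∪ C ∧
      (∀ F ∈ C, Even {i | F ∈ dfaces (Ωi i) d}.ncard) ∧
      (∀ F ∈ dfaces Ω d, Odd {i | F ∈ dfaces (Ωi i) d}.ncard) ∧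
      (∀ i, (verts (Ωi i)).ncard < (verts Ω).ncard)

/-- `Γ` is `d`-chorded: every face-minimal `d`-dimensional cycle in `Γ` that is not
`d`-complete has a chord set in `Γ`. -/
def DChorded (Γ : Set (Finset V)) (d : ℕ) : Prop :=
  ∀ Ω, CycleIn Γ Ω d → FaceMinimal Ω d → ¬ DComplete Ω d → ∃ C, ChordSet Γ Ω d C

/-- `Γ` is `d`-cycle-complete: every vertex-minimal `d`-dimensional cycle in `Γ` is
`d`-complete. -/
def DCycleComplete (Γ : Set (Finset V)) (d : ℕ) : Prop :=
  ∀ Ω, CycleIn Γ Ω d → VertexMinimal Γ Ω d → DComplete Ω d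

/-- The `d`-closure `Δ_d(K)` of the complex `K`, relative to the vertex set `W`:
it contains the faces of `K`, all subsets of `W` of size at most `d`, and every subset
`S` of `W` with `|S| > d+1` all of whose `(d+1)`-subsets are faces of `K`. -/
def closure (W : Set V) (K : Set (Finset V)) (d : ℕ) : Set (Finset V) :=
  K ∪ {S | ↑S ⊆ W ∧ S.card ≤ d} ∪
    {S | ↑S ⊆ W ∧ d + 1 < S.card ∧ ∀ T ⊆ S, T.card = d + 1 → T ∈ K}

/-- A `d`-dimensional tree: a pure `d`-dimensional complex with no `d`-dimensional cycles. -/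
def IsTree (K : Set (Finset V)) (d : ℕ) : Prop :=
  IsComplex K ∧ IsPureD K d ∧ ∀ Ω, ¬ CycleIn K Ω d

/-- The unsigned boundary map on chains (appropriate over rings of characteristic 2):
a face is sent to the sum of the faces obtained by deleting one vertex. -/
noncomputable def ubd {R : Type*} [AddCommMonoid R] (c : Finset V →₀ R) : Finset V →₀ R :=
  c.sum fun F a => F.sum fun v => Finsupp.single (F.erase v) a

/-- The signed (oriented) boundary map on chains, the vertices of each face being listed
in increasing order. -/
noncomputable def sbd [LinearOrder V] {R : Type*} [Ring R] (c : Finset V →₀ R) : Finset V →₀ R :=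
  c.sum fun F a =>
    F.sum fun v => Finsupp.single (F.erase v) ((-1 : R) ^ (F.filter fun w => w < v).card * a)

/-- `c` is an `i`-chain on the complex `K`: it is supported on `i`-faces of `K`. -/
def ChainOn {R : Type*} [Zero R] (K : Set (Finset V)) (i : ℕ) (c : Finset V →₀ R) : Prop :=
  ∀ F ∈ c.support, F ∈ K ∧ F.card = i + 1

/-- Vanishing of the reduced simplicial homology `H̃_i(K; R)` for the unsigned boundary
map (this is reduced simplicial homology when `R` has characteristic 2): every `i`-chain
with vanishing boundary (for `i = 0`, the boundary at the empty face is the augmentation ε)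
is the boundary of an `(i+1)`-chain. -/
def RedHomZeroU (K : Set (Finset V)) (R : Type*) [AddCommMonoid R] (i : ℕ) : Prop :=
  ∀ c : Finset V →₀ R, ChainOn K i c → ubd c = 0 →
    ∃ b : Finset V →₀ R, ChainOn K (i + 1) b ∧ ubd b = c

/-- Vanishing of the reduced simplicial homology `H̃_i(K; R)` (oriented chains). -/
def RedHomZeroS [LinearOrder V] (K : Set (Finset V)) (R : Type*) [Ring R] (i : ℕ) : Prop :=
  ∀ c : Finset V →₀ R, ChainOn K i c → sbd c = 0 →
    ∃ b : Finset V →₀ R, ChainOn K (i + 1) b ∧ sbd b = c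

/-- Orientability of a `d`-dimensional cycle: there is a choice of signs on its `d`-faces
making the resulting ℤ-chain have zero (oriented) boundary. -/
def Orientable [LinearOrder V] (Ω : Set (Finset V)) (d : ℕ) : Prop :=
  ∃ c : Finset V →₀ ℤ, ↑c.support = dfaces Ω d ∧
    (∀ F ∈ c.support, c F = 1 ∨ c F = -1) ∧ sbd c = 0

/-- Orientable-vertex-minimality of a cycle `Ω` in `Γ`: no orientable `d`-dimensional
cycle in `Γ` lies on a strict subset of the vertices of `Ω`. -/
def OrientVertexMinimal [LinearOrder V] (Γ Ω : Set (Finset V)) (d : ℕ) : Prop :=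
  ∀ Ω', CycleIn Γ Ω' d → Orientable Ω' d → ¬ (verts Ω' ⊂ verts Ω)

/-- `Γ` is orientably-`d`-cycle-complete: every orientably-vertex-minimal (orientable)
`d`-dimensional cycle in `Γ` is `d`-complete. -/
def OrientDCycleComplete [LinearOrder V] (Γ : Set (Finset V)) (d : ℕ) : Prop :=
  ∀ Ω, CycleIn Γ Ω d → Orientable Ω d → OrientVertexMinimal Γ Ω d → DComplete Ω d

/-- A minimal non-face of `K`: a subset of the vertex set that is not a face, all of whose
proper subsets are faces. -/
def MinNonFace (K : Set (Finset V)) (S : Finset V) : Prop :=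
  ↑S ⊆ verts K ∧ S ∉ K ∧ ∀ T ⊂ S, T ∈ K

section Helpers

set_option linter.unusedSectionVars false

variable {V : Type*} [DecidableEq V] [Fintype V]

lemma sbd_zero [LinearOrder V] {R : Type*} [Ring R] : sbd (0 : Finset V →₀ R) = 0 := by
  unfold sbd; simp

lemma sbd_single [LinearOrder V] {R : Type*} [Ring R] (F : Finset V) (a : R) :
    sbd (Finsupp.single F a) =
      F.sum fun v => Finsupp.single (F.erase v)
        ((-1 : R) ^ (F.filter fun w => w < v).card * a) := by
  unfold sbd
  rw [Finsupp.sum_single_index (by simp)]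

lemma sbd_add [LinearOrder V] {R : Type*} [Ring R] (c₁ c₂ : Finset V →₀ R) :
    sbd (c₁ + c₂) = sbd c₁ + sbd c₂ := by
  unfold sbd
  rw [Finsupp.sum_add_index]
  · intro F _; simp
  · intro F _ b₁ b₂
    simp [mul_add, Finsupp.single_add, Finset.sum_add_distrib]

lemma sbd_sum [LinearOrder V] {R : Type*} [Ring R] {ι : Type*} (s : Finset ι)
    (f : ι → (Finset V →₀ R)) :
    sbd (∑ i ∈ s, f i) = ∑ i ∈ s, sbd (f i) := by
  classical
  induction s using Finset.cons_induction with
  | empty => simpa using sbd_zero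
  | cons a s ha ih => rw [Finset.sum_cons, sbd_add, ih, Finset.sum_cons]

lemma sign_cancel [LinearOrder V] (G : Finset V) {v w : V}
    (hv : v ∈ G) (hvw : v < w) :
    ((-1:ℤ) ^ ((G.erase v).filter fun x => x < w).card *
      (-1:ℤ) ^ (G.filter fun x => x < v).card)
    + ((-1:ℤ) ^ ((G.erase w).filter fun x => x < v).card *
      (-1:ℤ) ^ (G.filter fun x => x < w).card) = 0 := by
  have h1 : ((G.erase v).filter fun x => x < w) = (G.filter fun x => x < w).erase v := by
    rw [Finset.filter_erase]
  have h2 : ((G.erase w).filter fun x => x < v) = (G.filter fun x => x < v) := by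
    rw [Finset.filter_erase, Finset.erase_eq_of_notMem]
    simp [hvw.asymm]
  have hmem : v ∈ (G.filter fun x => x < w) := Finset.mem_filter.2 ⟨hv, hvw⟩
  have h3 : ((G.filter fun x => x < w).erase v).card + 1 = (G.filter fun x => x < w).card :=
    Finset.card_erase_add_one hmem
  rw [h1, h2, ← h3, pow_succ]
  ring

lemma sbd_sbd_single [LinearOrder V] (G : Finset V) :
    sbd (sbd (Finsupp.single G (1 : ℤ))) = 0 := by
  rw [sbd_single, sbd_sum]
  have hrw : ∀ v ∈ G,
      sbd (Finsupp.single (G.erase v) ((-1:ℤ) ^ (G.filter fun w => w < v).card * 1)) =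
      ∑ w ∈ G.erase v, Finsupp.single ((G.erase v).erase w)
        ((-1:ℤ) ^ ((G.erase v).filter fun x => x < w).card *
          ((-1:ℤ) ^ (G.filter fun x => x < v).card * 1)) := by
    intro v _
    rw [sbd_single]
  rw [Finset.sum_congr rfl hrw, Finset.sum_sigma']
  refine Finset.sum_involution (fun p _ => ⟨p.2, p.1⟩) ?_ ?_ ?_ ?_
  · rintro ⟨v, w⟩ hp
    rw [Finset.mem_sigma] at hp
    obtain ⟨hv, hw⟩ := hp
    have hwG : w ∈ G := Finset.mem_of_mem_erase hw
    have hne : w ≠ v := Finset.ne_of_mem_erase hw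
    simp only
    rw [Finset.erase_right_comm (a := w) (b := v), ← Finsupp.single_add]
    have : ((-1:ℤ) ^ ((G.erase v).filter fun x => x < w).card *
          ((-1:ℤ) ^ (G.filter fun x => x < v).card * 1))
        + ((-1:ℤ) ^ ((G.erase w).filter fun x => x < v).card *
          ((-1:ℤ) ^ (G.filter fun x => x < w).card * 1)) = 0 := by
      rcases hne.lt_or_gt with h | h
      · have := sign_cancel G hwG h
        ring_nf
        ring_nf at this
        linarith
      · have := sign_cancel G hv h
        ring_nf
        ring_nf at this
        linarith
    rw [this, Finsupp.single_zero]
  · rintro ⟨v, w⟩ hp _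
    rw [Finset.mem_sigma] at hp
    have hne : w ≠ v := Finset.ne_of_mem_erase hp.2
    intro h
    exact hne (congrArg Sigma.fst h)
  · rintro ⟨v, w⟩ hp
    rw [Finset.mem_sigma] at hp ⊢
    exact ⟨Finset.mem_of_mem_erase hp.2,
      Finset.mem_erase.2 ⟨(Finset.ne_of_mem_erase hp.2).symm, hp.1⟩⟩
  · rintro ⟨v, w⟩ _
    rfl

end Helpers
lemma sbd_single_apply_erase [LinearOrder V] (G : Finset V) {v : V} (hv : v ∈ G) :
    (sbd (Finsupp.single G (1:ℤ))) (G.erase v)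
      = (-1:ℤ) ^ (G.filter fun w => w < v).card := by
  rw [sbd_single, Finsupp.finset_sum_apply, Finset.sum_eq_single v]
  · simp [Finsupp.single_apply]
  · intro w hw hne
    rw [Finsupp.single_apply, if_neg]
    rw [Finset.erase_inj G hw]
    exact hne
  · intro h; exact absurd hv h

lemma sbd_single_apply_ne [LinearOrder V] (G F : Finset V) (hF : ∀ v ∈ G, F ≠ G.erase v) :
    (sbd (Finsupp.single G (1:ℤ))) F = 0 := by
  rw [sbd_single, Finsupp.finset_sum_apply]
  refine Finset.sum_eq_zero fun v hv => ?_
  rw [Finsupp.single_apply, if_neg]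
  exact fun h => hF v hv h.symm

lemma sbd_mapRange [LinearOrder V] {k : Type*} [Ring k] (c : Finset V →₀ ℤ) :
    sbd (c.mapRange (Int.cast : ℤ → k) Int.cast_zero)
      = (sbd c).mapRange (Int.cast : ℤ → k) Int.cast_zero := by
  unfold sbd
  rw [Finsupp.sum_mapRange_index (by simp)]
  have : (Finsupp.mapRange (Int.cast : ℤ → k) Int.cast_zero)
        (c.sum fun F a => F.sum fun v =>
          Finsupp.single (F.erase v) ((-1 : ℤ) ^ (F.filter fun w => w < v).card * a))
      = (Finsupp.mapRange.addMonoidHom (Int.castAddHom k))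
        (c.sum fun F a => F.sum fun v =>
          Finsupp.single (F.erase v) ((-1 : ℤ) ^ (F.filter fun w => w < v).card * a)) := rfl
  rw [this, map_finsuppSum]
  refine Finsupp.sum_congr fun F _ => ?_
  rw [map_sum]
  refine Finset.sum_congr rfl fun v _ => ?_
  rw [Finsupp.mapRange.addMonoidHom_apply, Finsupp.mapRange_single]
  congr 1
  rw [Int.coe_castAddHom]
  push_cast
  rfl
set_option linter.unusedSectionVars false

lemma eq_erase_of_subset_card {G F : Finset V} (hsub : F ⊆ G) (hcard : F.card + 1 = G.card) :
    ∃ v ∈ G, F = G.erase v := by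
  have hne : (G \ F).Nonempty := by
    rw [← Finset.card_pos, Finset.card_sdiff_of_subset hsub]
    omega
  obtain ⟨v, hv⟩ := hne
  rw [Finset.mem_sdiff] at hv
  refine ⟨v, hv.1, ?_⟩
  apply Finset.eq_of_subset_of_card_le
  · exact fun x hx => Finset.mem_erase.2 ⟨fun h => hv.2 (h ▸ hx), hsub hx⟩
  · rw [Finset.card_erase_of_mem hv.1]; omega

lemma mem_pair_of_subset {G f F : Finset V} {x y : V} (hfF : f ⊆ F) (hFG : F ⊆ G)
    (hGf : G \ f = {x, y}) (hc : F.card = f.card + 1) :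
    F = insert x f ∨ F = insert y f := by
  have h1 : (F \ f).card = 1 := by rw [Finset.card_sdiff_of_subset hfF]; omega
  obtain ⟨z, hz⟩ := Finset.card_eq_one.1 h1
  have hzmem : z ∈ G \ f := by
    have : z ∈ F \ f := hz ▸ Finset.mem_singleton_self z
    exact Finset.mem_sdiff.2 ⟨hFG (Finset.mem_sdiff.1 this).1, (Finset.mem_sdiff.1 this).2⟩
  have hF : F = insert z f := by
    have := Finset.union_sdiff_of_subset hfF
    rw [hz] at this
    rw [← this, Finset.insert_eq, Finset.union_comm]
  rw [hGf] at hzmem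
  rcases Finset.mem_insert.1 hzmem with h | h
  · exact Or.inl (h ▸ hF)
  · exact Or.inr ((Finset.mem_singleton.1 h) ▸ hF)

lemma dfaces_bd {d : ℕ} {G : Finset V} (hG : G.card = d + 2) :
    dfaces {T | T ⊂ G} d = {F | ∃ v ∈ G, F = G.erase v} := by
  ext F
  constructor
  · rintro ⟨hFG, hFc⟩
    exact eq_erase_of_subset_card (Finset.ssubset_iff_subset_ne.1 hFG).1 (by omega)
  · rintro ⟨v, hv, rfl⟩
    refine ⟨Finset.erase_ssubset hv, ?_⟩
    rw [Finset.card_erase_of_mem hv, hG]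
    omega

lemma verts_bd {d : ℕ} {G : Finset V} (hG : G.card = d + 2) :
    verts {T | T ⊂ G} = ↑G := by
  ext x
  constructor
  · rintro ⟨F, hF, hx⟩
    exact (Finset.ssubset_iff_subset_ne.1 (hF : F ⊂ G)).1 hx
  · intro hx
    obtain ⟨y, hy, hyx⟩ := Finset.exists_mem_ne (s := G) (by omega) x
    exact ⟨G.erase y, Finset.erase_ssubset hy, Finset.mem_erase.2 ⟨fun h => hyx (h ▸ rfl), hx⟩⟩

lemma cycle_bd {d : ℕ} {G : Finset V} (hG : G.card = d + 2) :
    IsCycle {T | T ⊂ G} d := by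
  have hdf := dfaces_bd (V := V) hG
  refine ⟨?_, ?_, ?_, ?_, ?_⟩
  · intro F hF T hT
    exact lt_of_le_of_lt hT hF
  · intro F hF
    have hle : F.card ≤ d + 1 := by
      have := Finset.card_lt_card (hF : F ⊂ G)
      omega
    obtain ⟨T, hFT, hTG, hTc⟩ :=
      Finset.exists_subsuperset_card_eq (hF : F ⊂ G).subset hle (by omega)
    have hTss : T ⊂ G := lt_of_le_of_ne hTG (by intro h; rw [h] at hTc; omega)
    exact ⟨T, ⟨hTss, hTc⟩, hFT⟩
  · have : G.Nonempty := Finset.card_pos.1 (by omega)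
    obtain ⟨v, hv⟩ := this
    exact ⟨G.erase v, hdf ▸ (⟨v, hv, rfl⟩ : ∃ u ∈ G, G.erase v = G.erase u)⟩
  · intro F hF F' hF'
    rw [hdf] at hF hF'
    obtain ⟨v, hv, rfl⟩ := hF
    obtain ⟨w, hw, rfl⟩ := hF'
    rcases eq_or_ne v w with rfl | hne
    · exact Relation.ReflTransGen.refl
    · refine Relation.ReflTransGen.single ?_
      refine ⟨hdf ▸ (⟨v, hv, rfl⟩ : ∃ u ∈ G, G.erase v = G.erase u),
        hdf ▸ (⟨w, hw, rfl⟩ : ∃ u ∈ G, G.erase w = G.erase u), ?_⟩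
      have hinter : G.erase v ∩ G.erase w = (G.erase v).erase w := by
        ext a
        simp only [Finset.mem_inter, Finset.mem_erase]
        tauto
      rw [hinter, Finset.card_erase_of_mem (Finset.mem_erase.2 ⟨hne.symm, hw⟩),
        Finset.card_erase_of_mem hv, hG]
      omega
  · intro f hf hfc
    have hfG : f ⊆ G := (hf : f ⊂ G).subset
    have hcard2 : (G \ f).card = 2 := by
      rw [Finset.card_sdiff_of_subset hfG]; omega
    obtain ⟨x, y, hxy, hGf⟩ := Finset.card_eq_two.1 hcard2
    have hx : x ∈ G ∧ x ∉ f := by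
      have : x ∈ G \ f := hGf ▸ Finset.mem_insert_self x {y}
      exact Finset.mem_sdiff.1 this
    have hy : y ∈ G ∧ y ∉ f := by
      have : y ∈ G \ f := hGf ▸ Finset.mem_insert.2 (Or.inr (Finset.mem_singleton_self y))
      exact Finset.mem_sdiff.1 this
    have hset : {F | F ∈ dfaces {T | T ⊂ G} d ∧ f ⊆ F} = {insert x f, insert y f} := by
      ext F
      simp only [Set.mem_setOf_eq, Set.mem_insert_iff, Set.mem_singleton_iff]
      constructor
      · rintro ⟨⟨hFG, hFc⟩, hfF⟩
        exact mem_pair_of_subset hfF (hFG : F ⊂ G).subset hGf (by omega)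
      · have key : ∀ z ∈ G, z ∉ f → (insert z f ∈ dfaces {T | T ⊂ G} d ∧ f ⊆ insert z f) := by
          intro z hzG hzf
          have hcz : (insert z f).card = d + 1 := by
            rw [Finset.card_insert_of_notMem hzf, hfc]
          have hsub : insert z f ⊆ G := Finset.insert_subset hzG hfG
          have hss : insert z f ⊂ G :=
            lt_of_le_of_ne hsub (by intro h; rw [h] at hcz; omega)
          exact ⟨⟨hss, hcz⟩, Finset.subset_insert z f⟩
        rintro (rfl | rfl)
        · exact key x hx.1 hx.2
        · exact key y hy.1 hy.2
    rw [hset]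
    have hne : insert x f ≠ insert y f := by
      intro h
      have : x ∈ insert y f := h ▸ Finset.mem_insert_self x f
      rcases Finset.mem_insert.1 this with h' | h'
      · exact hxy h'
      · exact hx.2 h'
    rw [Set.ncard_pair hne]
    exact even_two
lemma orientable_bd [LinearOrder V] {d : ℕ} {G : Finset V} (hG : G.card = d + 2) :
    Orientable {T | T ⊂ G} d := by
  refine ⟨sbd (Finsupp.single G (1:ℤ)), ?_, ?_, sbd_sbd_single G⟩
  · rw [dfaces_bd hG]
    ext F
    simp only [Finset.coe_sort_coe, Finset.mem_coe, Finsupp.mem_support_iff, Set.mem_setOf_eq]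
    constructor
    · intro h
      by_contra hc
      push_neg at hc
      exact h (sbd_single_apply_ne G F hc)
    · rintro ⟨v, hv, rfl⟩
      rw [sbd_single_apply_erase G hv]
      rcases Nat.even_or_odd (G.filter fun w => w < v).card with he | ho
      · simp [he.neg_one_pow]
      · simp [ho.neg_one_pow]
  · intro F hF
    have hex : ∃ v ∈ G, F = G.erase v := by
      by_contra hc
      push_neg at hc
      exact (Finsupp.mem_support_iff.1 hF) (sbd_single_apply_ne G F hc)
    obtain ⟨v, hv, rfl⟩ := hex
    rw [sbd_single_apply_erase G hv]
    rcases Nat.even_or_odd (G.filter fun w => w < v).card with he | ho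
    · exact Or.inl he.neg_one_pow
    · exact Or.inr ho.neg_one_pow

/-- Theorem 6.1.1: if `Γ = Δ_d(Γ^{[d]})` and every induced subcomplex of
`Γ` has vanishing reduced homology `H̃_d(Γ_W; k) = 0` over the field `k` (as holds when the
Stanley–Reisner ideal of `Γ` has a `(d+1)`-linear resolution over `k`), then `Γ^{[d]}` is
orientably-`d`-cycle-complete. -/
theorem homology_vanishing_orientDCycleComplete {V : Type*} [DecidableEq V] [Fintype V]
    [LinearOrder V] (Γ : Set (Finset V)) (d : ℕ) (hcomplex : IsComplex Γ)
    (hcl : Γ = closure (verts Γ) (skel Γ d) d)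
    (k : Type*) [Field k]
    (hhom : ∀ W : Set V, RedHomZeroS (induced Γ W) k d) :
    OrientDCycleComplete (skel Γ d) d := by
  intro Ω hΩ hor hmin
  obtain ⟨hΩsub, hΩcyc⟩ := hΩ
  have hskelΓ : skel Γ d ⊆ Γ := by
    rintro T ⟨F, ⟨hFΓ, _⟩, hTF⟩
    exact hcomplex F hFΓ T hTF
  obtain ⟨c, hcsupp, hcval, hcbd⟩ := hor
  set W : Set V := verts Ω with hWdef
  set ck : Finset V →₀ k := c.mapRange (Int.cast : ℤ → k) Int.cast_zero with hck
  have hmemd : ∀ F ∈ c.support, F ∈ dfaces Ω d := by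
    intro F hF
    rw [← Finset.mem_coe, hcsupp] at hF
    exact hF
  have hchain : ChainOn (induced Γ W) d ck := by
    intro F hF
    have hFd : F ∈ dfaces Ω d := hmemd F (Finsupp.support_mapRange hF)
    exact ⟨⟨hskelΓ (hΩsub hFd.1), fun v hv => ⟨F, hFd.1, hv⟩⟩, hFd.2⟩
  have hckbd : sbd ck = 0 := by
    rw [hck, sbd_mapRange, hcbd]
    simp
  obtain ⟨b, hbchain, hbbd⟩ := hhom W ck hchain hckbd
  have hck0 : ck ≠ 0 := by
    obtain ⟨F0, hF0⟩ := hΩcyc.2.2.1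
    have hF0s : F0 ∈ c.support := by rw [← Finset.mem_coe, hcsupp]; exact hF0
    intro h
    have h0 : ck F0 = 0 := by rw [h]; rfl
    rw [hck, Finsupp.mapRange_apply] at h0
    rcases hcval F0 hF0s with h1 | h1 <;> rw [h1] at h0 <;> simp at h0
  have hb0 : b ≠ 0 := fun h => hck0 (by rw [← hbbd, h, sbd_zero])
  obtain ⟨G, hG⟩ := Finsupp.support_nonempty_iff.2 hb0
  obtain ⟨⟨hGΓ, hGW⟩, hGcard⟩ := hbchain G hG
  have hG2 : G.card = d + 2 := by omega
  -- the boundary of the simplex G is an orientable cycle in skel Γ d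
  have hΩ'sub : {T | T ⊂ G} ⊆ skel Γ d := by
    intro T hT
    have hT' : T ⊂ G := hT
    obtain ⟨v, hvG, hvT⟩ := Finset.exists_of_ssubset hT'
    refine ⟨G.erase v, ⟨hcomplex G hGΓ _ (Finset.erase_subset v G), ?_⟩,
      fun x hx => Finset.mem_erase.2 ⟨fun h => hvT (h ▸ hx), hT'.subset hx⟩⟩
    rw [Finset.card_erase_of_mem hvG, hG2]
    omega
  have hnot := hmin {T | T ⊂ G} ⟨hΩ'sub, cycle_bd hG2⟩ (orientable_bd hG2)
  rw [verts_bd hG2] at hnot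
  have hGeq : (↑G : Set V) = W := by
    rcases lt_or_eq_of_le hGW with h | h
    · exact absurd h hnot
    · exact h
  -- now prove d-completeness of Ω
  intro S hSW hScard
  have hSG : S ⊆ G := by
    rw [← Finset.coe_subset, hGeq]
    exact hSW
  obtain ⟨s, hsG, hSs⟩ := eq_erase_of_subset_card hSG (by omega)
  obtain ⟨F0, hF0⟩ := hΩcyc.2.2.1
  have hF0G : F0 ⊆ G := by
    rw [← Finset.coe_subset, hGeq]
    exact fun v hv => ⟨F0, hF0.1, hv⟩
  obtain ⟨u, huG, hF0u⟩ := eq_erase_of_subset_card hF0G (by rw [hF0.2]; omega)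
  rcases eq_or_ne u s with rfl | hus
  · rw [hSs, ← hF0u]
    exact hF0.1
  · -- the counting argument
    have hsF0 : s ∈ F0 := by
      rw [hF0u]
      exact Finset.mem_erase.2 ⟨Ne.symm hus, hsG⟩
    set f : Finset V := F0.erase s with hfdef
    have hfF0 : f ⊆ F0 := Finset.erase_subset s F0
    have hfΩ : f ∈ Ω := hΩcyc.1 F0 hF0.1 f hfF0
    have hfcard : f.card = d := by
      rw [hfdef, Finset.card_erase_of_mem hsF0, hF0.2]
      omega
    have heven := hΩcyc.2.2.2.2 f hfΩ hfcard
    have hfG : f ⊆ G := hfF0.trans hF0G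
    have hGf : G \ f = {u, s} := by
      ext a
      simp only [hfdef, hF0u, Finset.mem_sdiff, Finset.mem_erase, Finset.mem_insert,
        Finset.mem_singleton]
      constructor
      · rintro ⟨haG, h⟩
        by_contra hc
        push_neg at hc
        exact h ⟨hc.2, hc.1, haG⟩
      · rintro (rfl | rfl)
        · exact ⟨huG, fun h => h.2.1 rfl⟩
        · exact ⟨hsG, fun h => h.1 rfl⟩
    have hinsS : insert u f = S := by
      apply Finset.eq_of_subset_of_card_le
      · rw [hSs]
        refine Finset.insert_subset (Finset.mem_erase.2 ⟨hus, huG⟩) ?_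
        intro a ha
        rw [hfdef, hF0u] at ha
        have h1 := Finset.mem_erase.1 ha
        have h2 := Finset.mem_erase.1 h1.2
        exact Finset.mem_erase.2 ⟨h1.1, h2.2⟩
      · have hunf : u ∉ f := by
          rw [hfdef, hF0u]
          intro h
          exact (Finset.mem_erase.1 (Finset.mem_erase.1 h).2).1 rfl
        rw [Finset.card_insert_of_notMem hunf, hfcard, hScard]
    have hinsF0 : insert s f = F0 := Finset.insert_erase hsF0
    have hsubpair : {F | F ∈ dfaces Ω d ∧ f ⊆ F} ⊆ {F0, S} := by
      rintro F' ⟨hF'd, hfF'⟩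
      have hF'G : F' ⊆ G := by
        rw [← Finset.coe_subset, hGeq]
        exact fun v hv => ⟨F', hF'd.1, hv⟩
      rcases mem_pair_of_subset hfF' hF'G hGf (by rw [hF'd.2, hfcard]) with h | h
      · exact Or.inr (Set.mem_singleton_iff.2 (by rw [h, hinsS]))
      · exact Or.inl (by rw [h, hinsF0])
    have hF0mem : F0 ∈ {F | F ∈ dfaces Ω d ∧ f ⊆ F} := ⟨hF0, hfF0⟩
    by_contra hSno
    have hSnot : S ∉ {F | F ∈ dfaces Ω d ∧ f ⊆ F} := by
      intro hmem
      exact hSno hmem.1.1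
    have hEone : {F | F ∈ dfaces Ω d ∧ f ⊆ F} = {F0} := by
      apply Set.Subset.antisymm
      · intro x hx
        rcases hsubpair hx with h | h
        · exact h
        · exact absurd (h ▸ hx) hSnot
      · intro x hx
        rw [Set.mem_singleton_iff.1 hx]
        exact hF0mem
    rw [hEone, Set.ncard_singleton] at heven
    exact (Nat.not_even_iff_odd.2 odd_one) heven

end ChordedPaper
end

section
/- If Γ is a d-dimensional tree, then its d-closure Δ_d(Γ) has no faces of dimension greater than d; that is, every face of Δ_d(Γ) has cardinality at most d+1. -/
open Finset

namespace ChordedPaper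

variable {V : Type*} [DecidableEq V] [Fintype V]

/-- claim inside the proof of Theorem 7.2: the `d`-closure of a
`d`-dimensional tree has no faces of dimension greater than `d`. -/
theorem tree_closure_dim_le {V : Type*} [DecidableEq V] [Fintype V]
    (Γ : Set (Finset V)) (d : ℕ) (htree : IsTree Γ d) :
    ∀ F ∈ closure (verts Γ) Γ d, F.card ≤ d + 1 := by
  obtain ⟨hcx, hpure, hnocyc⟩ := htree
  intro F hF
  rcases hF with (hF | hF) | hF
  · obtain ⟨G, ⟨-, hGcard⟩, hFG⟩ := hpure F hF
    calc F.card ≤ G.card := Finset.card_le_card hFG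
      _ = d + 1 := hGcard
  · exact hF.2.trans (Nat.le_succ d)
  · exfalso
    obtain ⟨hFsub, hcard, hfaces⟩ := hF
    obtain ⟨T, hTF, hTcard⟩ := Finset.exists_subset_card_eq (show d + 2 ≤ F.card by omega)
    set Ω : Set (Finset V) := {G | G ⊆ T ∧ G.card ≤ d + 1} with hΩdef
    have hΩΓ : Ω ⊆ Γ := by
      rintro G ⟨hGT, hGc⟩
      obtain ⟨u, hGu, huT, huc⟩ :=
        Finset.exists_subsuperset_card_eq hGT hGc (by omega)
      exact hcx u (hfaces u (huT.trans hTF) huc) G hGu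
    have hdf : dfaces Ω d = {G | G ⊆ T ∧ G.card = d + 1} := by
      ext G
      simp only [dfaces, Set.mem_setOf_eq, hΩdef]
      constructor
      · rintro ⟨⟨h1, _⟩, h3⟩; exact ⟨h1, h3⟩
      · rintro ⟨h1, h3⟩; exact ⟨⟨h1, h3.le⟩, h3⟩
    have hpureΩ : IsPureD Ω d := by
      rintro G ⟨hGT, hGc⟩
      obtain ⟨u, hGu, huT, huc⟩ :=
        Finset.exists_subsuperset_card_eq hGT hGc (by omega)
      exact ⟨u, by rw [hdf]; exact ⟨huT, huc⟩, hGu⟩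
    have hcycle : IsCycle Ω d := by
      refine ⟨?_, hpureΩ, ?_, ?_, ?_⟩
      · rintro G ⟨hGT, hGc⟩ H hHG
        exact ⟨hHG.trans hGT, (Finset.card_le_card hHG).trans hGc⟩
      · obtain ⟨u, huT, huc⟩ := Finset.exists_subset_card_eq (show d + 1 ≤ T.card by omega)
        exact ⟨u, by rw [hdf]; exact ⟨huT, huc⟩⟩
      · -- path connected: any two distinct d-faces are adjacent
        intro A hA B hB
        rw [hdf] at hA hB
        by_cases hAB : A = B
        · subst hAB; exact Relation.ReflTransGen.refl
        · refine Relation.ReflTransGen.single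
            ⟨by rw [hdf]; exact hA, by rw [hdf]; exact hB, ?_⟩
          have hU : A ∪ B ⊆ T := Finset.union_subset hA.1 hB.1
          have h1 : (A ∪ B).card ≤ d + 2 := hTcard ▸ Finset.card_le_card hU
          have h2 : d + 2 ≤ (A ∪ B).card := by
            have hBA : ¬ B ⊆ A := fun h =>
              hAB (Finset.eq_of_subset_of_card_le h (le_of_eq (hA.2.trans hB.2.symm))).symm
            obtain ⟨v, hvB, hvA⟩ := Finset.not_subset.1 hBA
            calc d + 2 = (insert v A).card := by
                  rw [Finset.card_insert_of_notMem hvA, hA.2]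
              _ ≤ (A ∪ B).card := Finset.card_le_card
                  (Finset.insert_subset (Finset.mem_union_right _ hvB)
                    Finset.subset_union_left)
          have hUc : (A ∪ B).card = d + 2 := le_antisymm h1 h2
          have h3 := Finset.card_inter_add_card_union A B
          rw [hUc, hA.2, hB.2] at h3
          omega
      · -- every (d-1)-face is in exactly 2 d-faces
        rintro f ⟨hfT, _⟩ hfc
        have key : {G | G ∈ dfaces Ω d ∧ f ⊆ G} =
            ↑((T \ f).image fun v => insert v f) := by
          ext H
          simp only [Set.mem_setOf_eq, hdf, Finset.coe_image, Set.mem_image,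
            Finset.mem_coe, Finset.mem_sdiff]
          constructor
          · rintro ⟨⟨hHT, hHc⟩, hfH⟩
            obtain ⟨v, hvH, hvf⟩ := Finset.exists_of_ssubset
              (show f ⊂ H from Finset.ssubset_iff_subset_ne.2 ⟨hfH, by
                intro h; rw [h] at hfc; omega⟩)
            refine ⟨v, ⟨hHT hvH, hvf⟩, ?_⟩
            refine Finset.eq_of_subset_of_card_le
              (Finset.insert_subset hvH hfH) ?_
            rw [Finset.card_insert_of_notMem hvf, hfc, hHc]
          · rintro ⟨v, ⟨hvT, hvf⟩, rfl⟩
            refine ⟨⟨Finset.insert_subset hvT hfT, ?_⟩, Finset.subset_insert _ _⟩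
            rw [Finset.card_insert_of_notMem hvf, hfc]
        rw [key, Set.ncard_coe_finset, Finset.card_image_of_injOn,
          Finset.card_sdiff_of_subset hfT, hTcard, hfc]
        · exact ⟨1, by omega⟩
        · intro v hv w hw h
          have h2 : insert v f = insert w f := h
          have hv' : v ∈ insert w f := h2 ▸ Finset.mem_insert_self v f
          rcases Finset.mem_insert.1 hv' with h' | h'
          · exact h'
          · exact absurd h' (Finset.mem_sdiff.1 hv).2
    exact hnocyc Ω ⟨hΩΓ, hcycle⟩

end ChordedPaper
end

section
/- Let Γ be a simplicial complex and k a field of characteristic 2. Then the reduced simplicial homology H̃_d(Γ; k) is non-zero if and only if Γ contains a d-dimensional cycle the sum of whose d-faces is not a d-boundary in Γ. -/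
open Finset

/-!
Over a ring of characteristic 2 the indicator chain of a `d`-dimensional cycle has zero
boundary, because every `(d-1)`-face lies in an even number of its `d`-faces. Conversely,
expanding the coefficients of a homology cycle in an `𝔽₂`-basis of the coefficient ring writes
it as a linear combination of `0/1`-valued cycles. The support of such a cycle splits into
`d`-path components, and each component spans a `d`-dimensional cycle in `Γ`: the `d`-faces
around a `(d-1)`-face are pairwise adjacent, so they all lie in one component, which therefore
inherits the parity condition. Hence if the indicator chain of every cycle in `Γ` bounds, then so
does every homology cycle.
-/

namespace Finset

variable {α : Type*} [DecidableEq α] {F G g : Finset α}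

theorem erase_eq_iff_of_mem {v : α} (hv : v ∈ F) :
    F.erase v = g ↔ (g ⊆ F ∧ g.card + 1 = F.card) ∧ v ∉ g := by
  constructor
  · rintro rfl
    exact ⟨⟨erase_subset v F, card_erase_add_one hv⟩, notMem_erase v F⟩
  · rintro ⟨⟨hgF, hcard⟩, hvg⟩
    refine (eq_of_subset_of_card_le (subset_erase.2 ⟨hgF, hvg⟩) ?_).symm
    rw [card_erase_of_mem hv]
    omega

theorem card_filter_erase_eq (F g : Finset α) :
    #{v ∈ F | F.erase v = g} = if g ⊆ F ∧ g.card + 1 = F.card then 1 else 0 := by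
  split_ifs with h
  · rw [filter_congr fun v hv => by rw [erase_eq_iff_of_mem hv, and_iff_right h],
      ← sdiff_eq_filter, card_sdiff_of_subset h.1]
    omega
  · exact card_eq_zero.2 <| filter_eq_empty_iff.2 fun v hv he =>
      h ((erase_eq_iff_of_mem hv).1 he).1

theorem card_inter_eq_of_subset_of_subset (hF : F.card = g.card + 1) (hG : G.card = g.card + 1)
    (hgF : g ⊆ F) (hgG : g ⊆ G) (hne : F ≠ G) : (F ∩ G).card = g.card := by
  have hle := card_le_card (subset_inter hgF hgG)
  have hFG : ¬ F ⊆ G := fun h => hne (eq_of_subset_of_card_le h (by omega))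
  have hlt := card_lt_card (ssubset_iff_subset_ne.2 ⟨inter_subset_left, mt inter_eq_left.1 hFG⟩)
  omega

end Finset

namespace ChordedPaper

variable {V : Type*}

section Generated

variable {S : Set (Finset V)} {d : ℕ}

theorem isComplex_gen : IsComplex (gen S) :=
  fun _ ⟨F, hF, hGF⟩ _ hHG => ⟨F, hF, hHG.trans hGF⟩

theorem gen_subset {Γ : Set (Finset V)} (hΓ : IsComplex Γ) (hS : S ⊆ Γ) : gen S ⊆ Γ :=
  fun _ ⟨F, hF, hGF⟩ => hΓ F (hS hF) _ hGF

theorem dfaces_gen (hS : ∀ F ∈ S, F.card = d + 1) : dfaces (gen S) d = S := by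
  ext F
  refine ⟨fun ⟨⟨G, hG, hFG⟩, hF⟩ => ?_, fun hF => ⟨⟨F, hF, subset_rfl⟩, hS F hF⟩⟩
  rwa [eq_of_subset_of_card_le hFG (by rw [hS G hG, hF])]

theorem isPureD_gen (hS : ∀ F ∈ S, F.card = d + 1) : IsPureD (gen S) d := by
  rintro G ⟨F, hF, hGF⟩
  exact ⟨F, (dfaces_gen hS).symm ▸ hF, hGF⟩

end Generated

theorem chainOn_iff_mem_supported {R : Type*} [Semiring R] {K : Set (Finset V)} {i : ℕ}
    {c : Finset V →₀ R} : ChainOn K i c ↔ c ∈ Finsupp.supported R R (dfaces K i) :=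
  (Finsupp.mem_supported R c).symm

variable [DecidableEq V]

section BoundaryMap

variable {R : Type*}

theorem ubd_mapRange [AddCommMonoid R] {S : Type*} [AddCommMonoid S] (φ : R →+ S)
    (c : Finset V →₀ R) :
    ubd (Finsupp.mapRange φ φ.map_zero c) = Finsupp.mapRange φ φ.map_zero (ubd c) := by
  rw [ubd, ubd, Finsupp.sum_mapRange_index (fun _ => by simp), Finsupp.sum, Finsupp.sum,
    Finsupp.mapRange_finsetSum]
  simp only [Finsupp.mapRange_finsetSum, Finsupp.mapRange_single]

variable (R) in
noncomputable def ubdₗ [Semiring R] : (Finset V →₀ R) →ₗ[R] (Finset V →₀ R) :=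
  Finsupp.linearCombination R fun F => ∑ v ∈ F, Finsupp.single (F.erase v) 1

theorem ubdₗ_apply [Semiring R] (c : Finset V →₀ R) : ubdₗ R c = ubd c := by
  simp [ubdₗ, ubd, Finsupp.linearCombination_apply, Finset.smul_sum]

theorem ubd_sub [Ring R] (a b : Finset V →₀ R) : ubd (a - b) = ubd a - ubd b := by
  simp only [← ubdₗ_apply, map_sub]

variable (R) in
noncomputable def boundaries [Semiring R] (Γ : Set (Finset V)) (d : ℕ) :
    Submodule R (Finset V →₀ R) :=
  (Finsupp.supported R R (dfaces Γ (d + 1))).map (ubdₗ R)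

theorem mem_boundaries_iff [Semiring R] {Γ : Set (Finset V)} {d : ℕ} {c : Finset V →₀ R} :
    c ∈ boundaries R Γ d ↔ ∃ b, ChainOn Γ (d + 1) b ∧ ubd b = c := by
  simp only [boundaries, Submodule.mem_map, chainOn_iff_mem_supported, ubdₗ_apply]

theorem redHomZeroU_iff [Semiring R] {Γ : Set (Finset V)} {d : ℕ} :
    RedHomZeroU Γ R d ↔ ∀ c, ChainOn Γ d c → ubd c = 0 → c ∈ boundaries R Γ d := by
  simp only [RedHomZeroU, mem_boundaries_iff]

end BoundaryMap

section IndicatorChain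

variable {R : Type*}

variable (R) in
noncomputable def indicatorChain [AddCommMonoidWithOne R] (s : Finset (Finset V)) :
    Finset V →₀ R :=
  ∑ F ∈ s, Finsupp.single F 1

theorem indicatorChain_apply [AddCommMonoidWithOne R] (s : Finset (Finset V)) (F : Finset V) :
    indicatorChain R s F = if F ∈ s then 1 else 0 := by
  simp [indicatorChain, Finsupp.finsetSum_apply, Finsupp.single_apply]

theorem support_indicatorChain [AddCommMonoidWithOne R] [NeZero (1 : R)]
    (s : Finset (Finset V)) : (indicatorChain R s).support = s := by
  ext F
  simp [Finsupp.mem_support_iff, indicatorChain_apply]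

theorem eq_indicatorChain_support [AddCommMonoidWithOne R] {c : Finset V →₀ R}
    (hc : ∀ F ∈ c.support, c F = 1) : c = indicatorChain R c.support := by
  ext F
  by_cases hF : F ∈ c.support
  · rw [indicatorChain_apply, if_pos hF, hc F hF]
  · rw [indicatorChain_apply, if_neg hF, Finsupp.notMem_support_iff.1 hF]

theorem ubd_indicatorChain_apply [Semiring R] (s : Finset (Finset V)) (g : Finset V) :
    ubd (indicatorChain R s) g = #{F ∈ s | g ⊆ F ∧ g.card + 1 = F.card} := by
  rw [← ubdₗ_apply, indicatorChain, map_sum]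
  simp only [ubdₗ, Finsupp.linearCombination_single, one_smul, Finsupp.finsetSum_apply,
    Finsupp.single_apply, sum_boole, card_filter_erase_eq, Nat.cast_ite, Nat.cast_one,
    Nat.cast_zero]

theorem ubd_indicatorChain_eq_zero_iff [Ring R] [CharP R 2] {s : Finset (Finset V)} {d : ℕ}
    (hs : ∀ F ∈ s, F.card = d + 1) :
    ubd (indicatorChain R s) = 0 ↔ ∀ g : Finset V, g.card = d → Even #{F ∈ s | g ⊆ F} := by
  have hfilter (g : Finset V) :
      {F ∈ s | g ⊆ F ∧ g.card + 1 = F.card} = if g.card = d then {F ∈ s | g ⊆ F} else ∅ := by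
    split_ifs with hg
    · exact filter_congr fun F hF => by rw [hs F hF, hg, and_iff_left rfl]
    · exact filter_eq_empty_iff.2 fun F hF h => hg (by have := hs F hF; omega)
  simp_rw [Finsupp.ext_iff, ubd_indicatorChain_apply, Finsupp.coe_zero, Pi.zero_apply,
    CharP.cast_eq_zero_iff R 2, ← even_iff_two_dvd, hfilter]
  refine forall_congr' fun g => ?_
  split_ifs <;> simp [*]

end IndicatorChain

section Cycle

variable {d : ℕ}

theorem isCycle_gen {T : Finset (Finset V)} (hT : ∀ F ∈ T, F.card = d + 1) (hne : T.Nonempty)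
    (hconn : ∀ F ∈ T, ∀ G ∈ T, Relation.ReflTransGen (adj (T : Set (Finset V)) d) F G)
    (heven : ∀ g : Finset V, g.card = d → Even #{F ∈ T | g ⊆ F}) :
    IsCycle (gen (T : Set (Finset V))) d := by
  have hdf : dfaces (gen (T : Set (Finset V))) d = T := dfaces_gen hT
  refine ⟨isComplex_gen, isPureD_gen hT, by rwa [hdf, coe_nonempty], ?_, fun g _ hg => ?_⟩
  · rw [PathConn, hdf]
    exact hconn
  · have : {F | F ∈ dfaces (gen (T : Set (Finset V))) d ∧ g ⊆ F} = ↑{F ∈ T | g ⊆ F} := by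
      ext; simp [hdf]
    rw [this, Set.ncard_coe_finset]
    exact heven g hg

theorem IsCycle.ubd_indicatorChain_eq_zero {R : Type*} [Ring R] [CharP R 2]
    {Ω : Set (Finset V)} (hΩ : IsCycle Ω d) {s : Finset (Finset V)} (hs : ↑s = dfaces Ω d) :
    ubd (indicatorChain R s) = 0 := by
  have hmem {F} : F ∈ s ↔ F ∈ dfaces Ω d := by rw [← hs, mem_coe]
  refine (ubd_indicatorChain_eq_zero_iff fun F hF => (hmem.1 hF).2).2 fun g hg => ?_
  obtain ⟨F, hF⟩ | hempty := (s.filter (g ⊆ ·)).eq_empty_or_nonempty.symm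
  · have hgΩ : g ∈ Ω := hΩ.1 F (hmem.1 (mem_filter.1 hF).1).1 g (mem_filter.1 hF).2
    have : {F | F ∈ dfaces Ω d ∧ g ⊆ F} = ↑{F ∈ s | g ⊆ F} := by
      ext; simp [hmem]
    have heven := hΩ.2.2.2.2 g hgΩ hg
    rwa [this, Set.ncard_coe_finset] at heven
  · rw [hempty, card_empty]
    exact .zero

end Cycle

section PathComponent

variable {d : ℕ} {s : Finset (Finset V)} {F₀ F G : Finset V}

open scoped Classical in
noncomputable def pathComponent (s : Finset (Finset V)) (d : ℕ) (F₀ : Finset V) :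
    Finset (Finset V) :=
  {F ∈ s | Relation.ReflTransGen (adj (s : Set (Finset V)) d) F₀ F}

theorem mem_pathComponent :
    F ∈ pathComponent s d F₀ ↔
      F ∈ s ∧ Relation.ReflTransGen (adj (s : Set (Finset V)) d) F₀ F := by
  classical
  exact mem_filter

instance (S : Set (Finset V)) (d : ℕ) : Std.Symm (adj S d) :=
  ⟨fun _ _ ⟨hF, hG, h⟩ => ⟨hG, hF, by rwa [inter_comm]⟩⟩

theorem mem_pathComponent_of_adj (hF : F ∈ pathComponent s d F₀)
    (h : adj (s : Set (Finset V)) d F G) : G ∈ pathComponent s d F₀ :=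
  mem_pathComponent.2 ⟨mem_coe.1 h.2.1, (mem_pathComponent.1 hF).2.tail h⟩

theorem mem_pathComponent_of_subset (hs : ∀ F ∈ s, F.card = d + 1)
    (hF : F ∈ pathComponent s d F₀) (hG : G ∈ s) {g : Finset V} (hg : g.card = d)
    (hgF : g ⊆ F) (hgG : g ⊆ G) : G ∈ pathComponent s d F₀ := by
  obtain rfl | hne := eq_or_ne F G
  · exact hF
  subst hg
  have hFs := (mem_pathComponent.1 hF).1
  exact mem_pathComponent_of_adj hF
    ⟨hFs, hG, card_inter_eq_of_subset_of_subset (hs F hFs) (hs G hG) hgF hgG hne⟩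

theorem even_card_filter_pathComponent (hs : ∀ F ∈ s, F.card = d + 1)
    (heven : ∀ g : Finset V, g.card = d → Even #{F ∈ s | g ⊆ F}) (g : Finset V)
    (hg : g.card = d) : Even #{F ∈ pathComponent s d F₀ | g ⊆ F} := by
  obtain ⟨F, hF⟩ | hempty := ({F ∈ pathComponent s d F₀ | g ⊆ F}).eq_empty_or_nonempty.symm
  · -- the faces of `s` around `g` are pairwise adjacent, so all or none lie in the component
    convert heven g hg using 2
    rw [mem_filter] at hF
    ext G
    simp only [mem_filter]
    refine ⟨fun ⟨hG, hgG⟩ => ⟨(mem_pathComponent.1 hG).1, hgG⟩, fun ⟨hG, hgG⟩ => ⟨?_, hgG⟩⟩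
    exact mem_pathComponent_of_subset hs hF.1 hG hg hF.2 hgG
  · rw [hempty, card_empty]
    exact .zero

theorem reflTransGen_adj_pathComponent
    (h : Relation.ReflTransGen (adj (s : Set (Finset V)) d) F₀ F) :
    Relation.ReflTransGen (adj (pathComponent s d F₀ : Set (Finset V)) d) F₀ F := by
  induction h with
  | refl => exact .refl
  | tail hreach hadj ih =>
    exact ih.tail ⟨mem_pathComponent.2 ⟨hadj.1, hreach⟩,
      mem_pathComponent.2 ⟨hadj.2.1, hreach.tail hadj⟩,
      hadj.2.2⟩

theorem isCycle_gen_pathComponent (hs : ∀ F ∈ s, F.card = d + 1)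
    (heven : ∀ g : Finset V, g.card = d → Even #{F ∈ s | g ⊆ F}) (hF₀ : F₀ ∈ s) :
    IsCycle (gen (pathComponent s d F₀ : Set (Finset V))) d := by
  refine isCycle_gen (fun F hF => hs F (mem_pathComponent.1 hF).1)
    ⟨F₀, mem_pathComponent.2 ⟨hF₀, .refl⟩⟩
    (fun F hF G hG => ?_) (even_card_filter_pathComponent hs heven)
  exact (Std.Symm.symm _ _ (reflTransGen_adj_pathComponent (mem_pathComponent.1 hF).2)).trans
    (reflTransGen_adj_pathComponent (mem_pathComponent.1 hG).2)

end PathComponent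

section Homology

variable {R : Type*} [Ring R] [CharP R 2] {Γ : Set (Finset V)} {d : ℕ}

theorem indicatorChain_mem_boundaries (hΓ : IsComplex Γ)
    (hcycles : ∀ Ω, CycleIn Γ Ω d → ∀ s : Finset (Finset V), ↑s = dfaces Ω d →
      indicatorChain R s ∈ boundaries R Γ d)
    (s : Finset (Finset V)) (hsΓ : ↑s ⊆ dfaces Γ d) (hs : ubd (indicatorChain R s) = 0) :
    indicatorChain R s ∈ boundaries R Γ d := by
  induction s using Finset.strongInduction with
  | H s ih =>
  obtain rfl | ⟨F₀, hF₀⟩ := s.eq_empty_or_nonempty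
  · simp [indicatorChain]
  have hcard : ∀ F ∈ s, F.card = d + 1 := fun F hF => (hsΓ hF).2
  set T := pathComponent s d F₀
  have hTs : T ⊆ s := fun F hF => (mem_pathComponent.1 hF).1
  have hdfT : dfaces (gen (T : Set (Finset V))) d = T := dfaces_gen fun F hF => hcard F (hTs hF)
  have hT : CycleIn Γ (gen (T : Set (Finset V))) d :=
    ⟨gen_subset hΓ fun F hF => (hsΓ (hTs hF)).1,
      isCycle_gen_pathComponent hcard ((ubd_indicatorChain_eq_zero_iff hcard).1 hs) hF₀⟩
  have hsplit : indicatorChain R s = indicatorChain R T + indicatorChain R (s \ T) := by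
    rw [indicatorChain, indicatorChain, indicatorChain, add_comm, sum_sdiff hTs]
  have hrest : ubd (indicatorChain R (s \ T)) = 0 := by
    rw [eq_sub_of_add_eq' hsplit.symm, ubd_sub, hs, hT.2.ubd_indicatorChain_eq_zero hdfT.symm,
      sub_zero]
  have hF₀T : F₀ ∈ T := mem_pathComponent.2 ⟨hF₀, .refl⟩
  rw [hsplit]
  exact add_mem (hcycles _ hT T hdfT.symm) (ih _ (sdiff_ssubset hTs ⟨F₀, hF₀T⟩)
    (subset_trans (coe_subset.2 sdiff_subset) hsΓ) hrest)

theorem mem_span_zeroOne_of_ubd_eq_zero {c : Finset V →₀ R} (hc : ubd c = 0) :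
    c ∈ Submodule.span R {z | z.support ⊆ c.support ∧ (∀ F ∈ z.support, z F = 1) ∧ ubd z = 0} := by
  classical
  let := ZMod.algebra R 2
  let B := Module.Basis.ofVectorSpace (ZMod 2) R
  let φ j : R →+ R := (algebraMap (ZMod 2) R).toAddMonoidHom.comp (B.coord j).toAddMonoidHom
  let J := c.support.biUnion fun F => (B.repr (c F)).support
  have hJ (F : Finset V) : (B.repr (c F)).support ⊆ J := by
    by_cases hF : F ∈ c.support
    · exact subset_biUnion_of_mem (fun F => (B.repr (c F)).support) hF
    · simp [Finsupp.notMem_support_iff.1 hF]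
  have hc_eq : c = ∑ j ∈ J, B j • Finsupp.mapRange (φ j) (φ j).map_zero c := by
    ext F
    rw [Finsupp.finsetSum_apply]
    conv_lhs => rw [← B.linearCombination_repr (c F)]
    rw [Finsupp.linearCombination_apply, Finsupp.sum_of_support_subset _ (hJ F) _ (by simp)]
    refine sum_congr rfl fun j _ => ?_
    rw [Finsupp.smul_apply, Finsupp.mapRange_apply, Algebra.smul_def, Algebra.commutes]
    rfl
  refine (congrArg (· ∈ _) hc_eq).mpr ?_
  refine Submodule.sum_mem _ fun j _ => Submodule.smul_mem _ _ ?_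
  apply Submodule.subset_span
  refine ⟨Finsupp.support_mapRange, fun F hF => ?_, by rw [ubd_mapRange, hc, Finsupp.mapRange_zero]⟩
  rw [Finsupp.mem_support_iff, Finsupp.mapRange_apply] at hF
  change algebraMap (ZMod 2) R (B.repr (c F) j) ≠ 0 at hF
  change algebraMap (ZMod 2) R (B.repr (c F) j) = 1
  have zmod_two : ∀ r : ZMod 2, r = 0 ∨ r = 1 := by decide
  obtain h | h := zmod_two (B.repr (c F) j)
  · simp [h] at hF
  · rw [h, map_one]

theorem redHomZeroU_of_forall_cycleIn (hΓ : IsComplex Γ)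
    (hcycles : ∀ Ω, CycleIn Γ Ω d → ∀ s : Finset (Finset V), ↑s = dfaces Ω d →
      indicatorChain R s ∈ boundaries R Γ d) :
    RedHomZeroU Γ R d := by
  refine redHomZeroU_iff.2 fun c hc hcyc =>
    Submodule.span_le.2 ?_ (mem_span_zeroOne_of_ubd_eq_zero hcyc)
  rintro z ⟨hzc, hz1, hz⟩
  rw [eq_indicatorChain_support hz1] at hz ⊢
  exact indicatorChain_mem_boundaries hΓ hcycles _ (fun F hF => hc F (hzc hF)) hz

end Homology

/-- Theorem 5.3: over a field `k` of characteristic 2,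
`H̃_d(Γ; k) ≠ 0` if and only if `Γ` contains a `d`-dimensional cycle the sum of whose
`d`-faces is not a `d`-boundary in `Γ`. -/
theorem homology_nonzero_iff_cycle {V : Type*} [DecidableEq V] [Fintype V]
    (Γ : Set (Finset V)) (hcomplex : IsComplex Γ) (d : ℕ)
    (k : Type*) [Field k] [CharP k 2] :
    ¬ RedHomZeroU Γ k d ↔
      ∃ Ω, CycleIn Γ Ω d ∧
        ∀ c : Finset V →₀ k, ↑c.support = dfaces Ω d → (∀ F ∈ c.support, c F = 1) →
          ¬ ∃ b : Finset V →₀ k, ChainOn Γ (d + 1) b ∧ ubd b = c := by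
  simp_rw [← mem_boundaries_iff]
  constructor
  · refine fun hnz => by_contra fun hno => hnz (redHomZeroU_of_forall_cycleIn hcomplex ?_)
    intro Ω hΩ s hs
    by_contra hns
    refine hno ⟨Ω, hΩ, fun c hcΩ hc1 => ?_⟩
    rwa [eq_indicatorChain_support hc1, coe_injective (hcΩ.trans hs.symm)]
  · rintro ⟨Ω, hΩ, hnb⟩ hvan
    obtain ⟨s, hs⟩ := (Set.toFinite (dfaces Ω d)).exists_finset_coe
    have hsupp : (indicatorChain k s).support = s := support_indicatorChain s
    refine hnb _ (by rw [hsupp, hs]) (fun F hF => ?_) (redHomZeroU_iff.1 hvan _ (fun F hF => ?_)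
      (hΩ.2.ubd_indicatorChain_eq_zero hs))
    · rw [indicatorChain_apply, if_pos (hsupp ▸ hF)]
    · have hFΩ : F ∈ dfaces Ω d := hs ▸ mem_coe.2 (hsupp ▸ hF)
      exact ⟨hΩ.1 hFΩ.1, hFΩ.2⟩

end ChordedPaper
end

section
/- For any d < n, the pure d-skeleton of the n-simplex (the simplicial complex of all subsets of an (n+1)-element vertex set) is d-chorded. -/
open Finset

namespace ChordedPaper

variable {V : Type*} [DecidableEq V] [Fintype V]

-- auxiliary lemmas

private lemma ncard_setOf {α : Type*} [Fintype α] [DecidableEq α] (P : α → Prop)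
    [DecidablePred P] : {x | P x}.ncard = (Finset.univ.filter P).card := by
  rw [← Set.ncard_coe_finset]
  congr 1
  ext x
  simp

/-- The boundary of the simplex on vertex set `σ`. -/
private def bd (σ : Finset V) : Set (Finset V) := {F | F ⊂ σ}

private lemma bd_dfaces {σ : Finset V} {d : ℕ} (hσ : σ.card = d + 2) :
    dfaces (bd σ) d = {F | F ⊆ σ ∧ F.card = d + 1} := by
  ext F
  simp only [dfaces, bd, Set.mem_setOf_eq]
  constructor
  · rintro ⟨h1, h2⟩; exact ⟨h1.subset, h2⟩
  · rintro ⟨h1, h2⟩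
    refine ⟨Finset.ssubset_iff_subset_ne.mpr ⟨h1, ?_⟩, h2⟩
    rintro rfl; omega

private lemma bd_verts {σ : Finset V} {d : ℕ} (hσ : σ.card = d + 2) :
    verts (bd σ) = ↑σ := by
  ext v
  constructor
  · rintro ⟨F, hF, hv⟩
    have hF' : F ⊂ σ := hF
    exact hF'.subset hv
  · intro hv
    refine ⟨{v}, ?_, Finset.mem_singleton_self v⟩
    refine Finset.ssubset_iff_subset_ne.mpr ⟨Finset.singleton_subset_iff.mpr hv, ?_⟩
    rintro rfl
    simp at hσ

private lemma bd_isCycle {σ : Finset V} {d : ℕ} (hσ : σ.card = d + 2) :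
    IsCycle (bd σ) d := by
  classical
  have hpure : IsPureD (bd σ) d := by
    intro F hF
    have hcard : F.card ≤ d + 1 := by
      have := Finset.card_lt_card hF
      omega
    have hF' : F ⊂ σ := hF
    obtain ⟨u, hFu, huσ, hu⟩ := Finset.exists_subsuperset_card_eq hF'.subset hcard (by omega)
    refine ⟨u, ⟨Finset.ssubset_iff_subset_ne.mpr ⟨huσ, ?_⟩, hu⟩, hFu⟩
    rintro rfl; omega
  refine ⟨?_, hpure, ?_, ?_, ?_⟩
  · intro F hF G hGF
    exact lt_of_le_of_lt hGF hF
  · have hempty : (∅ : Finset V) ∈ bd σ := by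
      refine Finset.ssubset_iff_subset_ne.mpr ⟨Finset.empty_subset _, ?_⟩
      rintro rfl; simp at hσ
    obtain ⟨G, hG, -⟩ := hpure ∅ hempty
    exact ⟨G, hG⟩
  · intro F hF G hG
    have hFσ : F ⊂ σ := hF.1
    have hGσ : G ⊂ σ := hG.1
    have hFc : F.card = d + 1 := hF.2
    have hGc : G.card = d + 1 := hG.2
    rcases eq_or_ne F G with rfl | hne
    · exact Relation.ReflTransGen.refl
    · refine Relation.ReflTransGen.single ⟨hF, hG, ?_⟩
      have h1 : (F ∪ G).card + (F ∩ G).card = F.card + G.card :=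
        Finset.card_union_add_card_inter F G
      have h2 : F ∪ G ⊆ σ := Finset.union_subset hFσ.subset hGσ.subset
      have h3 : (F ∪ G).card ≤ d + 2 := hσ ▸ Finset.card_le_card h2
      have h4 : (F ∩ G).card < d + 1 := by
        have hsub : F ∩ G ⊆ F := Finset.inter_subset_left
        have hne' : F ∩ G ≠ F := by
          intro h
          exact hne (Finset.eq_of_subset_of_card_le
            (by rw [← h]; exact Finset.inter_subset_right)
            (by rw [hFc, hGc]))
        have := Finset.card_lt_card (Finset.ssubset_iff_subset_ne.mpr ⟨hsub, hne'⟩)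
        omega
      omega
  · intro f hf hfc
    have hset : {F | F ∈ dfaces (bd σ) d ∧ f ⊆ F}
        = ↑((σ \ f).image (fun x => insert x f)) := by
      ext F
      simp only [bd_dfaces hσ, Set.mem_setOf_eq, Finset.coe_image, Set.mem_image,
        Finset.mem_coe, Finset.mem_sdiff]
      constructor
      · rintro ⟨⟨hFσ, hFc⟩, hfF⟩
        have : (F \ f).card = 1 := by
          rw [Finset.card_sdiff_of_subset hfF, hFc, hfc]; omega
        obtain ⟨x, hx⟩ := Finset.card_eq_one.mp this
        have hxF : x ∈ F \ f := hx ▸ Finset.mem_singleton_self x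
        refine ⟨x, ⟨hFσ (Finset.mem_sdiff.mp hxF).1, (Finset.mem_sdiff.mp hxF).2⟩, ?_⟩
        apply Finset.Subset.antisymm
        · intro y hy
          rcases Finset.mem_insert.mp hy with rfl | hy
          · exact (Finset.mem_sdiff.mp hxF).1
          · exact hfF hy
        · intro y hy
          by_cases hyf : y ∈ f
          · exact Finset.mem_insert_of_mem hyf
          · have : y ∈ F \ f := Finset.mem_sdiff.mpr ⟨hy, hyf⟩
            rw [hx, Finset.mem_singleton] at this
            exact this ▸ Finset.mem_insert_self x f
      · rintro ⟨x, ⟨hxσ, hxf⟩, rfl⟩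
        refine ⟨⟨Finset.insert_subset hxσ hf.subset, ?_⟩, Finset.subset_insert x f⟩
        rw [Finset.card_insert_of_notMem hxf, hfc]
    rw [hset, Set.ncard_coe_finset]
    rw [Finset.card_image_of_injOn]
    · have : (σ \ f).card = 2 := by
        rw [Finset.card_sdiff_of_subset hf.subset, hσ, hfc]; omega
      rw [this]; exact even_two
    · intro x hx y hy hxy
      have hxf : x ∉ f := (Finset.mem_sdiff.mp hx).2
      have hyf : y ∉ f := (Finset.mem_sdiff.mp hy).2
      have hxy' : insert x f = insert y f := hxy
      have : x ∈ insert y f := by rw [← hxy']; exact Finset.mem_insert_self x f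
      rcases Finset.mem_insert.mp this with h | h
      · exact h
      · exact absurd h hxf

private lemma verts_big {Ω : Set (Finset V)} {d : ℕ} (hcy : IsCycle Ω d)
    (T : Finset V) (hTv : ↑T ⊆ verts Ω) (hTc : T.card = d + 1) (hTΩ : T ∉ Ω) :
    d + 3 ≤ (verts Ω).ncard := by
  classical
  obtain ⟨hcx, hpure, ⟨F₀, hF₀⟩, -, heven⟩ := hcy
  have hF₀Ω : F₀ ∈ Ω := hF₀.1
  have hF₀c : F₀.card = d + 1 := hF₀.2
  by_contra hlt
  push_neg at hlt
  set W : Finset V := (Set.toFinite (verts Ω)).toFinset with hW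
  have hWcard : W.card = (verts Ω).ncard := by
    rw [hW, Set.ncard_eq_toFinset_card]
  have hmemW : ∀ v, v ∈ verts Ω → v ∈ W := by
    intro v hv; rw [hW, Set.Finite.mem_toFinset]; exact hv
  have hsubW : ∀ G ∈ Ω, G ⊆ W := fun G hG v hv => hmemW v ⟨G, hG, hv⟩
  have hF₀W : F₀ ⊆ W := hsubW F₀ hF₀.1
  have hTW : T ⊆ W := fun v hv => hmemW v (hTv hv)
  have hWle : W.card ≤ d + 2 := by omega
  have hWge : d + 1 ≤ W.card := hF₀c ▸ Finset.card_le_card hF₀W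
  have hWne : W.card ≠ d + 1 := by
    intro h
    have h1 : F₀ = W := Finset.eq_of_subset_of_card_le hF₀W (by omega)
    have h2 : T = W := Finset.eq_of_subset_of_card_le hTW (by omega)
    exact hTΩ ((h2.trans h1.symm) ▸ hF₀Ω)
  have hW2 : W.card = d + 2 := by omega
  have hFT : F₀ ≠ T := fun h => hTΩ (h ▸ hF₀.1)
  set f : Finset V := F₀ ∩ T with hf
  have hfF₀ : f ⊆ F₀ := Finset.inter_subset_left
  have hcards : (F₀ ∪ T).card + f.card = (d + 1) + (d + 1) := by
    rw [hf, Finset.card_union_add_card_inter, hF₀c, hTc]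
  have hUW : F₀ ∪ T ⊆ W := Finset.union_subset hF₀W hTW
  have hUle : (F₀ ∪ T).card ≤ d + 2 := hW2 ▸ Finset.card_le_card hUW
  have hfle : f.card ≤ d := by
    have hsub : f ⊆ T := Finset.inter_subset_right
    have hne : f ≠ T := by
      intro h
      exact hFT (Finset.eq_of_subset_of_card_le (h ▸ hfF₀ : T ⊆ F₀)
        (by rw [hF₀c, hTc])).symm
    have := Finset.card_lt_card (Finset.ssubset_iff_subset_ne.mpr ⟨hsub, hne⟩)
    omega
  have hfc : f.card = d := by omega
  have hUcard : (F₀ ∪ T).card = d + 2 := by omega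
  have hUeq : F₀ ∪ T = W := Finset.eq_of_subset_of_card_le hUW (by omega)
  have hfΩ : f ∈ Ω := hcx F₀ hF₀Ω f hfF₀
  have := heven f hfΩ hfc
  have hsingle : {F | F ∈ dfaces Ω d ∧ f ⊆ F} = {F₀} := by
    ext G
    simp only [Set.mem_setOf_eq, Set.mem_singleton_iff]
    constructor
    · rintro ⟨hG, hfG⟩
      have hGΩ : G ∈ Ω := hG.1
      have hGc : G.card = d + 1 := hG.2
      have hGW : G ⊆ W := hsubW G hGΩ
      have : (G \ f).card = 1 := by rw [Finset.card_sdiff_of_subset hfG, hGc, hfc]; omega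
      obtain ⟨y, hy⟩ := Finset.card_eq_one.mp this
      have hyG : y ∈ G \ f := hy ▸ Finset.mem_singleton_self y
      obtain ⟨hyG', hyf⟩ := Finset.mem_sdiff.mp hyG
      have hGeq : G = insert y f := by
        apply Finset.Subset.antisymm
        · intro z hz
          by_cases hzf : z ∈ f
          · exact Finset.mem_insert_of_mem hzf
          · have : z ∈ G \ f := Finset.mem_sdiff.mpr ⟨hz, hzf⟩
            rw [hy, Finset.mem_singleton] at this
            exact this ▸ Finset.mem_insert_self y f
        · exact Finset.insert_subset hyG' hfG
      have hyW : y ∈ F₀ ∪ T := hUeq ▸ hGW hyG'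
      rcases Finset.mem_union.mp hyW with hyF | hyT
      · exact Finset.eq_of_subset_of_card_le
          (hGeq ▸ Finset.insert_subset hyF hfF₀) (by rw [hGc, hF₀c])
      · exfalso
        have : G ⊆ T := hGeq ▸ Finset.insert_subset hyT Finset.inter_subset_right
        have : G = T := Finset.eq_of_subset_of_card_le this (by rw [hGc, hTc])
        exact hTΩ (this ▸ hGΩ)
    · rintro rfl
      exact ⟨hF₀, hfF₀⟩
  rw [hsingle, Set.ncard_singleton] at this
  exact (Nat.not_even_iff_odd.mpr odd_one) this


/-- Remark 4.6: for any `d < n`, the pure `d`-skeleton of the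
`n`-simplex is `d`-chorded. -/
theorem skeleton_simplex_dChorded {V : Type*} [DecidableEq V] [Fintype V]
    (d n : ℕ) (hdn : d < n) (S : Finset V) (hS : S.card = n + 1) :
    DChorded (skel {F : Finset V | F ⊆ S} d) d := by
  classical
  intro Ω hΩ _hmin hnc
  obtain ⟨hΩΓ, hcy⟩ := hΩ
  obtain ⟨hcx, hpure, hnem, hpc, heven⟩ := hcy
  -- the vertices of Ω lie in S
  have hvS : verts Ω ⊆ ↑S := by
    rintro v ⟨F, hF, hv⟩
    obtain ⟨G, hG, hFG⟩ := hΩΓ hF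
    exact Finset.mem_coe.mpr (hG.1 (hFG hv))
  -- a missing (d+1)-set
  rw [DComplete] at hnc
  push_neg at hnc
  obtain ⟨T₀, hT₀v, hT₀c, hT₀Ω⟩ := hnc
  have hv3 : d + 3 ≤ (verts Ω).ncard :=
    verts_big ⟨hcx, hpure, hnem, hpc, heven⟩ T₀ hT₀v hT₀c hT₀Ω
  -- a base vertex
  obtain ⟨F₁, hF₁⟩ := hnem
  have hF₁c : F₁.card = d + 1 := hF₁.2
  have hF₁Ω : F₁ ∈ Ω := hF₁.1
  obtain ⟨v₀, hv₀F⟩ := Finset.card_pos.mp (by omega : 0 < F₁.card)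
  have hv₀ : v₀ ∈ verts Ω := ⟨F₁, hF₁Ω, hv₀F⟩
  -- the collection B of (d+2)-simplices
  set A : Finset (Finset V) :=
    Finset.univ.filter (fun F => F ∈ dfaces Ω d ∧ v₀ ∉ F) with hA
  set B : Finset (Finset V) := A.image (fun F => insert v₀ F) with hB
  have hAmem : ∀ F, F ∈ A ↔ F ∈ dfaces Ω d ∧ v₀ ∉ F := by
    intro F
    rw [hA, Finset.mem_filter]
    simp only [Finset.mem_univ, true_and]
  have hBmem : ∀ σ, σ ∈ B ↔ ∃ F, (F ∈ dfaces Ω d ∧ v₀ ∉ F) ∧ insert v₀ F = σ := by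
    intro σ
    rw [hB, Finset.mem_image]
    constructor
    · rintro ⟨F, hF, rfl⟩; exact ⟨F, (hAmem F).mp hF, rfl⟩
    · rintro ⟨F, hF, rfl⟩; exact ⟨F, (hAmem F).mpr hF, rfl⟩
  have hBcard : ∀ σ ∈ B, σ.card = d + 2 := by
    intro σ hσ
    obtain ⟨F, ⟨hF, hvF⟩, rfl⟩ := (hBmem σ).mp hσ
    rw [Finset.card_insert_of_notMem hvF, hF.2]
  have hBverts : ∀ σ ∈ B, ↑σ ⊆ verts Ω := by
    intro σ hσ
    obtain ⟨F, ⟨hF, hvF⟩, rfl⟩ := (hBmem σ).mp hσ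
    intro x hx
    rw [Finset.coe_insert, Set.mem_insert_iff] at hx
    rcases hx with rfl | hx
    · exact hv₀
    · exact ⟨F, hF.1, hx⟩
  have hinj : Set.InjOn (fun F => insert v₀ F) (↑A : Set (Finset V)) := by
    intro x hx y hy hxy
    have hxv : v₀ ∉ x := ((hAmem x).mp (Finset.mem_coe.mp hx)).2
    have hyv : v₀ ∉ y := ((hAmem y).mp (Finset.mem_coe.mp hy)).2
    have h : (insert v₀ x).erase v₀ = (insert v₀ y).erase v₀ := by
      have hxy' : insert v₀ x = insert v₀ y := hxy
      rw [hxy']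
    rwa [Finset.erase_insert hxv, Finset.erase_insert hyv] at h
  -- the key counting identity
  have key : ∀ T : Finset V, T.card = d + 1 →
      (Even ((B.filter (fun σ => T ⊆ σ)).card) ↔ T ∉ dfaces Ω d) := by
    intro T hTc
    have hcount : (B.filter (fun σ => T ⊆ σ)).card
        = (A.filter (fun F => T ⊆ insert v₀ F)).card := by
      rw [hB, Finset.filter_image]
      exact Finset.card_image_of_injOn
        (hinj.mono (Finset.coe_subset.mpr (Finset.filter_subset _ _)))
    by_cases hvT : v₀ ∈ T
    · -- case v₀ ∈ T
      set f : Finset V := T.erase v₀ with hfdef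
      have hfc : f.card = d := by
        rw [hfdef, Finset.card_erase_of_mem hvT, hTc]; omega
      have hfT : insert v₀ f = T := Finset.insert_erase hvT
      have hfsubT : f ⊆ T := Finset.erase_subset _ _
      have hsub : ∀ F, v₀ ∉ F → (T ⊆ insert v₀ F ↔ f ⊆ F) := by
        intro F hvF
        constructor
        · intro h x hx
          have hxT : x ∈ T := hfsubT hx
          have hxv : x ≠ v₀ := Finset.ne_of_mem_erase hx
          rcases Finset.mem_insert.mp (h hxT) with h' | h'
          · exact absurd h' hxv
          · exact h'
        · intro h x hx
          rcases eq_or_ne x v₀ with rfl | hxv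
          · exact Finset.mem_insert_self _ _
          · exact Finset.mem_insert_of_mem (h (Finset.mem_erase.mpr ⟨hxv, hx⟩))
      have hfilter : A.filter (fun F => T ⊆ insert v₀ F) = A.filter (fun F => f ⊆ F) :=
        Finset.filter_congr (fun F hF => hsub F ((hAmem F).mp hF).2)
      rw [hcount, hfilter]
      by_cases hfΩ : f ∈ Ω
      · have heq := heven f hfΩ hfc
        rw [ncard_setOf] at heq
        have hsplit : ((Finset.univ.filter
              (fun F : Finset V => F ∈ dfaces Ω d ∧ f ⊆ F)).filter (fun F => v₀ ∉ F)).card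
            + ((Finset.univ.filter
              (fun F : Finset V => F ∈ dfaces Ω d ∧ f ⊆ F)).filter (fun F => ¬ v₀ ∉ F)).card
            = (Finset.univ.filter
              (fun F : Finset V => F ∈ dfaces Ω d ∧ f ⊆ F)).card :=
          Finset.card_filter_add_card_filter_not _
        have h1 : (Finset.univ.filter
              (fun F : Finset V => F ∈ dfaces Ω d ∧ f ⊆ F)).filter (fun F => v₀ ∉ F)
            = A.filter (fun F => f ⊆ F) := by
          ext F
          rw [hA]
          simp only [Finset.mem_filter, Finset.mem_univ, true_and]
          tauto
        have h2 : (Finset.univ.filter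
              (fun F : Finset V => F ∈ dfaces Ω d ∧ f ⊆ F)).filter (fun F => ¬ v₀ ∉ F)
            = if T ∈ dfaces Ω d then {T} else ∅ := by
          ext F
          simp only [Finset.mem_filter, Finset.mem_univ, true_and, not_not]
          constructor
          · rintro ⟨⟨hF, hfF⟩, hvF⟩
            have hTF : T ⊆ F := by
              rw [← hfT]; exact Finset.insert_subset hvF hfF
            have hFT : F = T :=
              (Finset.eq_of_subset_of_card_le hTF (by rw [hF.2, hTc])).symm
            subst hFT
            rw [if_pos hF]
            exact Finset.mem_singleton_self _
          · intro hF
            by_cases hT : T ∈ dfaces Ω d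
            · rw [if_pos hT, Finset.mem_singleton] at hF
              subst hF
              exact ⟨⟨hT, hfsubT⟩, hvT⟩
            · rw [if_neg hT] at hF
              exact absurd hF (Finset.notMem_empty F)
        rw [h1, h2] at hsplit
        rw [Nat.even_iff] at heq ⊢
        by_cases hT : T ∈ dfaces Ω d
        · rw [if_pos hT, Finset.card_singleton] at hsplit
          simp only [hT, not_true_eq_false, iff_false]
          omega
        · rw [if_neg hT, Finset.card_empty] at hsplit
          simp only [hT, not_false_eq_true, iff_true]
          omega
      · have hzero : A.filter (fun F => f ⊆ F) = ∅ := by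
          rw [Finset.filter_eq_empty_iff]
          intro F hF hfF
          exact hfΩ (hcx F ((hAmem F).mp hF).1.1 f hfF)
        rw [hzero, Finset.card_empty]
        simp only [Even.zero, true_iff]
        intro hT
        exact hfΩ (hcx T hT.1 f hfsubT)
    · -- case v₀ ∉ T
      have hfilter : A.filter (fun F => T ⊆ insert v₀ F) = A.filter (fun F => F = T) := by
        apply Finset.filter_congr
        intro F hF
        obtain ⟨hFd, hvF⟩ := (hAmem F).mp hF
        constructor
        · intro h
          have hTF : T ⊆ F := by
            intro x hx
            rcases Finset.mem_insert.mp (h hx) with rfl | h'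
            · exact absurd hx hvT
            · exact h'
          exact (Finset.eq_of_subset_of_card_le hTF (by rw [hFd.2, hTc])).symm
        · rintro rfl
          exact Finset.subset_insert _ _
      rw [hcount, hfilter, Finset.filter_eq']
      by_cases hT : T ∈ A
      · rw [if_pos hT, Finset.card_singleton]
        have hTd := ((hAmem T).mp hT).1
        simp [hTd, Nat.even_iff]
      · rw [if_neg hT, Finset.card_empty]
        have hTd : T ∉ dfaces Ω d := fun h => hT ((hAmem T).mpr ⟨h, hvT⟩)
        simp [hTd]
  -- B is nonempty and has at least two elements
  have hBne : B.Nonempty := by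
    rw [Finset.nonempty_iff_ne_empty]
    intro hne
    have h := key F₁ hF₁c
    rw [hne, Finset.filter_empty, Finset.card_empty] at h
    exact (h.mp Even.zero) hF₁
  have hk2 : 2 ≤ B.card := by
    by_contra hlt
    push_neg at hlt
    have h1 : B.card = 1 := by
      have := Finset.card_pos.mpr hBne; omega
    obtain ⟨σ, hσ⟩ := Finset.card_eq_one.mp h1
    have hsub : ∀ T ∈ dfaces Ω d, T ⊆ σ := by
      intro T hT
      have hodd : ¬ Even ((B.filter (fun σ' => T ⊆ σ')).card) := by
        rw [key T hT.2]; simp [hT]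
      have hne : (B.filter (fun σ' => T ⊆ σ')).Nonempty := by
        rw [Finset.nonempty_iff_ne_empty]
        intro h0; rw [h0, Finset.card_empty] at hodd; exact hodd Even.zero
      obtain ⟨σ', hσ'⟩ := hne
      obtain ⟨hσ'B, hTσ'⟩ := Finset.mem_filter.mp hσ'
      rw [hσ, Finset.mem_singleton] at hσ'B
      exact hσ'B ▸ hTσ'
    have hvsub : verts Ω ⊆ ↑σ := by
      rintro v ⟨F, hF, hv⟩
      obtain ⟨G, hG, hFG⟩ := hpure F hF
      exact Finset.mem_coe.mpr ((hsub G hG) (hFG hv))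
    have hle : (verts Ω).ncard ≤ d + 2 := by
      have h := Set.ncard_le_ncard hvsub (Finset.finite_toSet σ)
      rw [Set.ncard_coe_finset] at h
      have hσB : σ ∈ B := by rw [hσ]; exact Finset.mem_singleton_self σ
      rw [hBcard σ hσB] at h
      exact h
    omega
  -- indexing the simplices of B
  let e : ↥B ≃ Fin B.card := Fintype.equivFinOfCardEq (Fintype.card_coe B)
  set σi : Fin B.card → Finset V := fun i => ((e.symm i : ↥B) : Finset V) with hσidef
  have hσiB : ∀ i, σi i ∈ B := fun i => (e.symm i).2
  have hσisurj : ∀ σ ∈ B, ∃ i, σi i = σ := by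
    intro σ hσ
    refine ⟨e ⟨σ, hσ⟩, ?_⟩
    rw [hσidef]
    simp
  have hσiinj : Function.Injective σi := by
    intro i j hij
    exact e.symm.injective (Subtype.ext hij)
  have hidx : ∀ T : Finset V, {i | T ∈ dfaces (bd (σi i)) d}.ncard
      = (B.filter (fun σ => T ∈ dfaces (bd σ) d)).card := by
    intro T
    rw [ncard_setOf]
    apply Finset.card_bij (fun i _ => σi i)
    · intro i hi
      exact Finset.mem_filter.mpr ⟨hσiB i, (Finset.mem_filter.mp hi).2⟩
    · intro i _ j _ hij
      exact hσiinj hij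
    · intro σ hσ
      obtain ⟨hσB, hσT⟩ := Finset.mem_filter.mp hσ
      obtain ⟨i, rfl⟩ := hσisurj σ hσB
      exact ⟨i, Finset.mem_filter.mpr ⟨Finset.mem_univ i, hσT⟩, rfl⟩
  have hbridge : ∀ T : Finset V, T.card = d + 1 →
      (B.filter (fun σ => T ∈ dfaces (bd σ) d)) = (B.filter (fun σ => T ⊆ σ)) := by
    intro T hTc
    apply Finset.filter_congr
    intro σ hσ
    rw [bd_dfaces (hBcard σ hσ)]
    simp only [Set.mem_setOf_eq]
    exact ⟨fun h => h.1, fun h => ⟨h, hTc⟩⟩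
  -- the union of the boundary cycles and the chord set C
  have hUmem : ∀ F ∈ (⋃ i, dfaces (bd (σi i)) d), F.card = d + 1 ∧ ∃ σ ∈ B, F ⊆ σ := by
    intro F hF
    rw [Set.mem_iUnion] at hF
    obtain ⟨i, hFi⟩ := hF
    rw [bd_dfaces (hBcard _ (hσiB i))] at hFi
    exact ⟨hFi.2, σi i, hσiB i, hFi.1⟩
  have hzU : dfaces Ω d ⊆ ⋃ i, dfaces (bd (σi i)) d := by
    intro T hT
    have hodd : ¬ Even ((B.filter (fun σ' => T ⊆ σ')).card) := by
      rw [key T hT.2]; simp [hT]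
    have hne : (B.filter (fun σ' => T ⊆ σ')).Nonempty := by
      rw [Finset.nonempty_iff_ne_empty]
      intro h0; rw [h0, Finset.card_empty] at hodd; exact hodd Even.zero
    obtain ⟨σ, hσ⟩ := hne
    obtain ⟨hσB, hTσ⟩ := Finset.mem_filter.mp hσ
    obtain ⟨i, rfl⟩ := hσisurj σ hσB
    rw [Set.mem_iUnion]
    refine ⟨i, ?_⟩
    rw [bd_dfaces (hBcard _ (hσiB i))]
    exact ⟨hTσ, hT.2⟩
  set C : Set (Finset V) := (⋃ i, dfaces (bd (σi i)) d) \ dfaces Ω d with hC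
  refine ⟨C, ?_, ?_, ?_, B.card, (fun i => bd (σi i)), hk2, ?_, ?_, ?_, ?_, ?_⟩
  · -- C ⊆ dfaces Γ d
    rintro F ⟨hFU, hFz⟩
    obtain ⟨hFc, σ, hσB, hFσ⟩ := hUmem F hFU
    have hFS : F ⊆ S := by
      intro x hx
      exact Finset.mem_coe.mp (hvS (hBverts σ hσB (Finset.mem_coe.mpr (hFσ hx))))
    exact ⟨⟨F, ⟨hFS, hFc⟩, subset_rfl⟩, hFc⟩
  · -- C ∩ Ω = ∅
    rintro F ⟨hFU, hFz⟩ hFΩ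
    exact hFz ⟨hFΩ, (hUmem F hFU).1⟩
  · -- vertices of C in verts Ω
    rintro F ⟨hFU, hFz⟩
    obtain ⟨hFc, σ, hσB, hFσ⟩ := hUmem F hFU
    intro x hx
    exact hBverts σ hσB (Finset.mem_coe.mpr (hFσ (Finset.mem_coe.mp hx)))
  · -- each Ωi is a cycle
    exact fun i => bd_isCycle (hBcard _ (hσiB i))
  · -- the union condition
    show (⋃ i, dfaces (bd (σi i)) d) = dfaces Ω d ∪ C
    rw [hC, Set.union_diff_self]
    exact (Set.union_eq_self_of_subset_left hzU).symm
  · -- even condition on C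
    rintro F ⟨hFU, hFz⟩
    show Even {i | F ∈ dfaces (bd (σi i)) d}.ncard
    obtain ⟨hFc, -⟩ := hUmem F hFU
    rw [hidx F, hbridge F hFc]
    exact (key F hFc).mpr hFz
  · -- odd condition on dfaces Ω
    intro F hF
    show Odd {i | F ∈ dfaces (bd (σi i)) d}.ncard
    rw [hidx F, hbridge F hF.2, ← Nat.not_even_iff_odd]
    intro hev
    exact ((key F hF.2).mp hev) hF
  · -- vertex counts decrease
    intro i
    show (verts (bd (σi i))).ncard < (verts Ω).ncard
    rw [bd_verts (hBcard _ (hσiB i)), Set.ncard_coe_finset, hBcard _ (hσiB i)]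
    omega

end ChordedPaper
end
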